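/- For every N ≥ 1 there exists a matrix T over ℤ indexed by Fin N × Fin N that is lower triangular (T i j = 0 whenever j > i) with all diagonal entries equal to 1, such that for every d ≥ 1 and every n with 1 ≤ n ≤ N, p_d(n) equals the sum of the entries in row n−1 of the matrix power T^d (the sum taken over all columns). -/

import Mathlib

/-- A Ferrers diagram in `ℕ^k`: a finite nonempty downward-closed subset of `Fin k → ℕ`. -/
def IsFerrers {k : ℕ} (F : Finset (Fin k → ℕ)) : Prop :=
  F.Nonempty ∧ ∀ a ∈ F, ∀ x : Fin k → ℕ, (∀ i, x i ≤ a i) → x ∈ F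

/-- A Ferrers diagram is strict if every coordinate is used by some element. -/
def IsStrict {k : ℕ} (F : Finset (Fin k → ℕ)) : Prop :=
  ∀ i : Fin k, ∃ a ∈ F, a i ≠ 0

/-- `numPart d n` = `p_d(n)`, the number of Ferrers diagrams in `ℕ^(d+1)` with `n` elements. -/
noncomputable def numPart (d n : ℕ) : ℕ :=
  Nat.card {F : Finset (Fin (d + 1) → ℕ) // IsFerrers F ∧ F.card = n}

/-- `Amat n r` = `a_{n,r}`, the number of strict Ferrers diagrams in `ℕ^r` with `n` elements. -/
noncomputable def Amat (n r : ℕ) : ℕ :=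
  Nat.card {F : Finset (Fin r → ℕ) // IsFerrers F ∧ IsStrict F ∧ F.card = n}

/-- `mu r` = `μ_r = {0, e_1, …, e_r} ⊆ ℕ^r`. -/
def mu (r : ℕ) : Finset (Fin r → ℕ) :=
  insert 0 (Finset.univ.image fun i => Pi.single i 1)

/-- The reduced dimension of a Ferrers diagram `F ⊆ ℕ^x` (containing `μ_x`): the number of
coordinates used by some element of `F \ μ_x`. -/
noncomputable def rdim {x : ℕ} (F : Finset (Fin x → ℕ)) : ℕ :=
  Nat.card {i : Fin x // ∃ a ∈ F \ mu x, a i ≠ 0}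

/-- Two coordinates are touched by a common element of the skew diagram `σ`. -/
def Touches {x : ℕ} (σ : Finset (Fin x → ℕ)) (i j : Fin x) : Prop :=
  ∃ a ∈ σ, a i ≠ 0 ∧ a j ≠ 0

/-- `B` is a block of the finest partition of `Fin x` compatible with `σ`,
i.e. an equivalence class of the equivalence relation generated by `Touches σ`. -/
def IsBlock {x : ℕ} (σ : Finset (Fin x → ℕ)) (B : Set (Fin x)) : Prop :=
  ∃ i : Fin x, B = {j | Relation.EqvGen (Touches σ) i j}

/-- The support of `a` is contained in `B`. -/
def SuppIn {x : ℕ} (a : Fin x → ℕ) (B : Set (Fin x)) : Prop :=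
  ∀ i, a i ≠ 0 → i ∈ B

/-- The component of `σ` with block `B` is of type `σ₂`: `B = {i, j}` with `i ≠ j`, and the
elements of `σ` supported in `B` are exactly `{e_i + e_j}`. -/
def IsSigma2 {x : ℕ} (σ : Finset (Fin x → ℕ)) (B : Set (Fin x)) : Prop :=
  ∃ i j : Fin x, i ≠ j ∧ B = {i, j} ∧
    {a ∈ (σ : Set (Fin x → ℕ)) | SuppIn a B} = {Pi.single i 1 + Pi.single j 1}

/-- `Cmat m x` = `c_{m,x}`. -/
noncomputable def Cmat (m x : ℕ) : ℕ :=
  Nat.card {F : Finset (Fin x → ℕ) //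
    IsFerrers F ∧ mu x ⊆ F ∧ F.card = m + x + 1 ∧ rdim F = x}

/-- `Dmat m x` = `d_{m,x}`. -/
noncomputable def Dmat (m x : ℕ) : ℕ :=
  Nat.card {F : Finset (Fin x → ℕ) //
    IsFerrers F ∧ mu x ⊆ F ∧ F.card = m + x + 1 ∧ rdim F = x ∧
      ∀ B : Set (Fin x), IsBlock (F \ mu x) B → ¬ IsSigma2 (F \ mu x) B}

/-- A point of type 1: `e_i + e_j` for some `i ≠ j`. -/
def IsType1 {r : ℕ} (a : Fin r → ℕ) : Prop :=
  ∃ i j : Fin r, i ≠ j ∧ a = Pi.single i 1 + Pi.single j 1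

/-- A point of type 2: `2·e_i` for some `i`. -/
def IsType2 {r : ℕ} (a : Fin r → ℕ) : Prop :=
  ∃ i : Fin r, a = Pi.single i 2

/-- `Fmat n r` = `f_{n,r}`. -/
noncomputable def Fmat (n r : ℕ) : ℕ :=
  Nat.card {F : Finset (Fin r → ℕ) //
    IsFerrers F ∧ mu r ⊆ F ∧ F.card = n ∧
      ∀ B : Set (Fin r), IsBlock (F \ mu r) B →
        ∃ a ∈ F \ mu r, SuppIn a B ∧ ¬ IsType1 a}

/-!
Sorting the Ferrers diagrams in `ℕ^(d+1)` by the set of coordinates they use gives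
`p_d(n) = ∑ᵣ C(d+1, r) a_{n,r}`, and Pascal's rule turns this into
`p_d(n+1) = ∑ₖ C(d, k) b_{n,k}` with `b_{n,k} = a_{n+1,k} + a_{n+1,k+1}`.
The matrix `B = (b_{n,k})` is lower unitriangular with first column `1` (`b_{n,0} = p_0(n+1) = 1`),
so if `B'` has entries `b_{n,k+1}` then `S = B' B⁻¹` is strictly lower triangular and moves the
`k`-th column of `B` to the `(k+1)`-th; hence `S^k` has row sums `b_{n,k}`, and by the binomial
theorem `T = 1 + S` has row sums `∑ₖ C(d, k) b_{n,k} = p_d(n+1)` for `T^d`.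
-/

open Finset Matrix

section ColumnShift

variable {R : Type*} [CommRing R] (N : ℕ) (b : ℕ → ℕ → R)

def truncation : Matrix (Fin N) (Fin N) R := of fun j k => b j k

noncomputable def columnShift : Matrix (Fin N) (Fin N) R :=
  truncation N (fun j k => b j (k + 1)) * (truncation N b)⁻¹

variable {N b}

lemma truncation_isLowerTriangular (hb : ∀ n k, n < k → b n k = 0) :
    (truncation N b).IsLowerTriangular :=
  fun i j hij => hb i j (OrderDual.toDual_lt_toDual.mp hij)

lemma det_truncation (hb : ∀ n k, n < k → b n k = 0) (hdiag : ∀ n, b n n = 1) :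
    (truncation N b).det = 1 := by
  rw [det_of_isLowerTriangular _ (truncation_isLowerTriangular hb)]
  exact prod_eq_one fun i _ => hdiag i

lemma isUnit_det_truncation (hb : ∀ n k, n < k → b n k = 0) (hdiag : ∀ n, b n n = 1) :
    IsUnit (truncation N b).det := by
  rw [det_truncation hb hdiag]
  exact isUnit_one

lemma columnShift_mul_truncation (hb : ∀ n k, n < k → b n k = 0) (hdiag : ∀ n, b n n = 1) :
    columnShift N b * truncation N b = truncation N (fun j k => b j (k + 1)) :=
  nonsing_inv_mul_cancel_right _ _ (isUnit_det_truncation hb hdiag)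

lemma columnShift_apply_of_le (hb : ∀ n k, n < k → b n k = 0) (hdiag : ∀ n, b n n = 1)
    {i j : Fin N} (hij : i ≤ j) : columnShift N b i j = 0 := by
  let := invertibleOfIsUnitDet _ (isUnit_det_truncation (N := N) hb hdiag)
  have hinv : ((truncation N b)⁻¹).IsLowerTriangular :=
    blockTriangular_inv_of_blockTriangular (truncation_isLowerTriangular hb)
  rw [columnShift, mul_apply]
  refine sum_eq_zero fun m _ => ?_
  rcases lt_or_ge m j with hmj | hjm
  · rw [hinv (OrderDual.toDual_lt_toDual.mpr hmj), mul_zero]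
  · rw [truncation, of_apply, hb _ _ (Nat.lt_succ_of_le (hij.trans hjm)), zero_mul]

lemma columnShift_pow_mulVec_one (hb : ∀ n k, n < k → b n k = 0) (hdiag : ∀ n, b n n = 1)
    (hcol : ∀ n, b n 0 = 1) (k : ℕ) : columnShift N b ^ k *ᵥ 1 = fun j : Fin N => b j k := by
  induction k with
  | zero => ext j; simp [hcol]
  | succ k ih =>
    rw [pow_succ', ← mulVec_mulVec, ih]
    rcases lt_or_ge k N with hk | hk
    · have hcolk : (fun j : Fin N => b j k) = truncation N b *ᵥ Pi.single ⟨k, hk⟩ 1 := by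
        ext j; simp [truncation]
      rw [hcolk, mulVec_mulVec, columnShift_mul_truncation hb hdiag]
      ext j; simp [truncation]
    · have hzero : ∀ j : Fin N, ∀ l, k ≤ l → b j l = 0 := fun j l hl => hb _ _ (by omega)
      rw [show (fun j : Fin N => b j k) = 0 from funext fun j => hzero j k le_rfl, mulVec_zero]
      exact funext fun j => (hzero j _ k.le_succ).symm

theorem exists_unitriangular_rowSum_pow (hb : ∀ n k, n < k → b n k = 0)
    (hdiag : ∀ n, b n n = 1) (hcol : ∀ n, b n 0 = 1) :
    ∃ T : Matrix (Fin N) (Fin N) R, (∀ i j, i < j → T i j = 0) ∧ (∀ i, T i i = 1) ∧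
      ∀ d (n : Fin N), ∑ j, (T ^ d) n j =
        ∑ k ∈ range (d + 1), (d.choose k : R) * b n k := by
  refine ⟨columnShift N b + 1, fun i j hij => ?_, fun i => ?_, fun d n => ?_⟩
  · rw [Matrix.add_apply, columnShift_apply_of_le hb hdiag hij.le, one_apply_ne hij.ne, add_zero]
  · rw [Matrix.add_apply, columnShift_apply_of_le hb hdiag le_rfl, one_apply_eq, zero_add]
  · have hpow : (columnShift N b + 1) ^ d *ᵥ 1
        = ∑ k ∈ range (d + 1), d.choose k • (columnShift N b ^ k *ᵥ 1) := by
      rw [(Commute.one_right _).add_pow, sum_mulVec]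
      refine sum_congr rfl fun k _ => ?_
      rw [one_pow, mul_one, ← Nat.cast_comm, ← nsmul_eq_mul, smul_mulVec]
    simpa [columnShift_pow_mulVec_one hb hdiag hcol, mulVec, dotProduct] using congrFun hpow n

end ColumnShift

section Ferrers

variable {k : ℕ}

lemma single_le_iff {a : Fin k → ℕ} {i : Fin k} {t : ℕ} :
    Pi.single i t ≤ a ↔ t ≤ a i := by
  refine ⟨fun h => by simpa using h i, fun h j => ?_⟩
  rcases eq_or_ne j i with rfl | hji
  · simpa using h
  · simp [Pi.single_eq_of_ne hji]

lemma IsFerrers.apply_lt_card {F : Finset (Fin k → ℕ)} (hF : IsFerrers F) {a : Fin k → ℕ}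
    (ha : a ∈ F) (i : Fin k) : a i < F.card := by
  have hsub : (range (a i + 1)).map ⟨Pi.single i, Pi.single_injective i⟩ ⊆ F := by
    intro x hx
    obtain ⟨t, ht, rfl⟩ := mem_map.mp hx
    exact hF.2 a ha _ (single_le_iff.mpr (Nat.lt_succ_iff.mp (mem_range.mp ht)))
  simpa using card_le_card hsub

lemma IsFerrers.subset_piFinset {F : Finset (Fin k → ℕ)} (hF : IsFerrers F) :
    F ⊆ Fintype.piFinset fun _ => range F.card :=
  fun _ ha => Fintype.mem_piFinset.mpr fun i => mem_range.mpr (hF.apply_lt_card ha i)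

lemma isFerrers_piFinset_range {n : ℕ} (hn : n ≠ 0) :
    IsFerrers (Fintype.piFinset fun _ : Fin k => range n) := by
  refine ⟨⟨0, by simpa using fun _ => Nat.pos_of_ne_zero hn⟩, fun a ha x hx => ?_⟩
  simp only [Fintype.mem_piFinset, mem_range] at ha ⊢
  exact fun i => (hx i).trans_lt (ha i)

instance finite_isFerrers_card (k n : ℕ) :
    Finite {F : Finset (Fin k → ℕ) // IsFerrers F ∧ F.card = n} := by
  have hsub : {F : Finset (Fin k → ℕ) | IsFerrers F ∧ F.card = n} ⊆
      ↑(Fintype.piFinset fun _ : Fin k => range n).powerset := by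
    rintro F ⟨hF, rfl⟩
    exact mem_powerset.mpr hF.subset_piFinset
  exact ((finite_toSet _).subset hsub).to_subtype

end Ferrers

section Support

variable {k : ℕ}

open Classical in
noncomputable def coordSupport (F : Finset (Fin k → ℕ)) : Finset (Fin k) :=
  {i | ∃ a ∈ F, a i ≠ 0}

lemma mem_coordSupport {F : Finset (Fin k → ℕ)} {i : Fin k} :
    i ∈ coordSupport F ↔ ∃ a ∈ F, a i ≠ 0 := by
  simp [coordSupport]

lemma isStrict_iff_coordSupport_eq_univ {F : Finset (Fin k → ℕ)} :
    IsStrict F ↔ coordSupport F = univ := by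
  simp [IsStrict, eq_univ_iff_forall, mem_coordSupport]

lemma isFerrers_map_iff {m : ℕ} (φ : (Fin m → ℕ) ↪o (Fin k → ℕ))
    (hφ : IsLowerSet (Set.range φ)) {G : Finset (Fin m → ℕ)} :
    IsFerrers (G.map φ.toEmbedding) ↔ IsFerrers G := by
  refine and_congr map_nonempty ⟨fun h c hc y hy => ?_, fun h a ha x hx => ?_⟩
  · have : φ y ∈ G.map φ.toEmbedding := h _ (mem_map_of_mem _ hc) _ (φ.monotone hy)
    simpa using this
  · obtain ⟨c, hc, rfl⟩ := mem_map.mp ha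
    obtain ⟨y, rfl⟩ := hφ hx ⟨c, rfl⟩
    exact mem_map_of_mem _ (h c hc y (φ.le_iff_le.mp hx))

end Support

section ExtendByZero

variable {m k : ℕ} (e : Fin m ↪ Fin k)

noncomputable def extendByZero : (Fin m → ℕ) ↪o (Fin k → ℕ) :=
  OrderEmbedding.ofMapLEIff (fun b => Function.extend e b 0) fun x y => by
    refine ⟨fun h j => by simpa [e.injective.extend_apply] using h (e j), fun h i => ?_⟩
    by_cases hi : ∃ j, e j = i
    · obtain ⟨j, rfl⟩ := hi
      simpa [e.injective.extend_apply] using h j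
    · simp [Function.extend_apply' _ _ _ hi]

variable {e}

lemma extendByZero_apply_self (b : Fin m → ℕ) (j : Fin m) : extendByZero e b (e j) = b j :=
  e.injective.extend_apply _ _ _

lemma extendByZero_apply_of_notMem_range (b : Fin m → ℕ) {i : Fin k} (hi : i ∉ Set.range e) :
    extendByZero e b i = 0 :=
  Function.extend_apply' _ _ _ hi

lemma mem_range_extendByZero {a : Fin k → ℕ} :
    a ∈ Set.range (extendByZero e) ↔ ∀ i ∉ Set.range e, a i = 0 := by
  refine ⟨?_, fun ha => ⟨a ∘ e, funext fun i => ?_⟩⟩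
  · rintro ⟨b, rfl⟩ i hi
    exact extendByZero_apply_of_notMem_range b hi
  · by_cases hi : i ∈ Set.range e
    · obtain ⟨j, rfl⟩ := hi
      exact extendByZero_apply_self _ j
    · rw [extendByZero_apply_of_notMem_range _ hi, ha i hi]

lemma isLowerSet_range_extendByZero : IsLowerSet (Set.range (extendByZero e)) := by
  intro a x hx ha
  rw [mem_range_extendByZero] at ha ⊢
  exact fun i hi => Nat.eq_zero_of_le_zero (ha i hi ▸ hx i)

lemma coordSupport_map_extendByZero (G : Finset (Fin m → ℕ)) :
    coordSupport (G.map (extendByZero e).toEmbedding) = (coordSupport G).map e := by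
  ext i
  simp only [mem_coordSupport, mem_map, RelEmbedding.coe_toEmbedding]
  constructor
  · rintro ⟨_, ⟨b, hb, rfl⟩, hbi⟩
    by_cases hi : i ∈ Set.range e
    · obtain ⟨j, rfl⟩ := hi
      exact ⟨j, ⟨b, hb, by rwa [extendByZero_apply_self] at hbi⟩, rfl⟩
    · exact absurd (extendByZero_apply_of_notMem_range b hi) hbi
  · rintro ⟨j, ⟨b, hb, hbj⟩, rfl⟩
    exact ⟨_, ⟨b, hb, rfl⟩, by rwa [extendByZero_apply_self]⟩

end ExtendByZero

section SupportDecomposition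

variable {m k : ℕ}

lemma exists_map_extendByZero_eq {e : Fin m ↪ Fin k} {F : Finset (Fin k → ℕ)}
    (hF : coordSupport F ⊆ univ.map e) :
    ∃ G : Finset (Fin m → ℕ), G.map (extendByZero e).toEmbedding = F := by
  have hrange : ∀ a ∈ F, a ∈ Set.range (extendByZero e) := by
    refine fun a ha => mem_range_extendByZero.mpr fun i hi => ?_
    by_contra hai
    obtain ⟨j, -, rfl⟩ := mem_map.mp (hF (mem_coordSupport.mpr ⟨a, ha, hai⟩))
    exact hi ⟨j, rfl⟩
  refine ⟨F.preimage _ (extendByZero e).injective.injOn, ext fun a => ⟨?_, fun ha => ?_⟩⟩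
  · intro ha
    obtain ⟨b, hb, rfl⟩ := mem_map.mp ha
    exact mem_preimage.mp hb
  · obtain ⟨b, rfl⟩ := hrange a ha
    exact mem_map_of_mem _ (mem_preimage.mpr ha)

noncomputable def strictEquivSupportFiber (e : Fin m ↪ Fin k) (n : ℕ) :
    {G : Finset (Fin m → ℕ) // IsFerrers G ∧ IsStrict G ∧ G.card = n} ≃
      {F : Finset (Fin k → ℕ) // IsFerrers F ∧ F.card = n ∧ coordSupport F = univ.map e} :=
  Equiv.ofBijective
    (fun G => ⟨G.1.map (extendByZero e).toEmbedding,
      (isFerrers_map_iff _ isLowerSet_range_extendByZero).mpr G.2.1,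
      by rw [card_map, G.2.2.2],
      by rw [coordSupport_map_extendByZero, isStrict_iff_coordSupport_eq_univ.mp G.2.2.1]⟩)
    ⟨fun G H h => Subtype.ext (map_injective _ (congrArg Subtype.val h)), by
      rintro ⟨F, hF, hcard, hsupp⟩
      obtain ⟨G, rfl⟩ := exists_map_extendByZero_eq hsupp.subset
      rw [coordSupport_map_extendByZero, map_inj, ← isStrict_iff_coordSupport_eq_univ] at hsupp
      rw [isFerrers_map_iff _ isLowerSet_range_extendByZero] at hF
      exact ⟨⟨G, hF, hsupp, by rwa [card_map] at hcard⟩, rfl⟩⟩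

lemma card_isFerrers_coordSupport_eq (n : ℕ) (s : Finset (Fin k)) :
    Nat.card {F : Finset (Fin k → ℕ) // IsFerrers F ∧ F.card = n ∧ coordSupport F = s} =
      Amat n s.card := by
  have := Nat.card_congr (strictEquivSupportFiber (s.orderEmbOfFin rfl).toEmbedding n)
  rw [map_orderEmbOfFin_univ] at this
  exact this.symm

lemma Nat.card_subtype_eq_sum_card_fiber {α β : Type*} [Fintype β] (p : α → Prop)
    [Finite {a // p a}] (f : α → β) :
    Nat.card {a // p a} = ∑ b, Nat.card {a // p a ∧ f a = b} := by
  rw [← Nat.card_congr (Equiv.sigmaFiberEquiv fun a : {a // p a} => f a), Nat.card_sigma]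
  exact sum_congr rfl fun b _ => Nat.card_congr (Equiv.subtypeSubtypeEquivSubtypeInter p (f · = b))

theorem numPart_eq_sum_choose_mul_Amat (d n : ℕ) :
    numPart d n = ∑ r ∈ range (d + 2), (d + 1).choose r * Amat n r := by
  rw [numPart, Nat.card_subtype_eq_sum_card_fiber _ coordSupport]
  simp_rw [and_assoc, card_isFerrers_coordSupport_eq]
  rw [← powerset_univ, sum_powerset_apply_card]
  simp

end SupportDecomposition

section StrictCounts

variable {r : ℕ}

lemma mem_mu {a : Fin r → ℕ} : a ∈ mu r ↔ a = 0 ∨ ∃ i, Pi.single i 1 = a := by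
  simp [mu]

lemma eq_single_of_le_single {x : Fin r → ℕ} {i : Fin r} {c : ℕ} (hx : x ≤ Pi.single i c) :
    x = Pi.single i (x i) := by
  funext j
  rcases eq_or_ne j i with rfl | hji
  · simp
  · simpa [Pi.single_eq_of_ne hji] using hx j

lemma card_mu (r : ℕ) : (mu r).card = r + 1 := by
  have hinj : Function.Injective fun i : Fin r => (Pi.single i 1 : Fin r → ℕ) :=
    fun i j h => by simpa [Pi.single_apply] using congrFun h i
  rw [mu, card_insert_of_notMem, card_image_of_injective _ hinj, card_univ, Fintype.card_fin]
  simp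

lemma isFerrers_mu (r : ℕ) : IsFerrers (mu r) := by
  refine ⟨⟨0, mem_insert_self _ _⟩, fun a ha x hx => ?_⟩
  rcases mem_mu.mp ha with rfl | ⟨i, rfl⟩
  · exact mem_mu.mpr (Or.inl (funext fun i => Nat.le_zero.mp (hx i)))
  · rw [eq_single_of_le_single hx]
    rcases Nat.le_one_iff_eq_zero_or_eq_one.mp (by simpa using hx i) with h | h
    · simp [h, mu]
    · exact mem_mu.mpr (Or.inr ⟨i, by rw [h]⟩)

lemma isStrict_mu (r : ℕ) : IsStrict (mu r) :=
  fun i => ⟨Pi.single i 1, mem_mu.mpr (Or.inr ⟨i, rfl⟩), by simp⟩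

lemma IsFerrers.mu_subset_of_isStrict {F : Finset (Fin r → ℕ)} (hF : IsFerrers F)
    (hst : IsStrict F) : mu r ⊆ F := by
  intro x hx
  obtain ⟨a, ha⟩ := hF.1
  rcases mem_mu.mp hx with rfl | ⟨i, rfl⟩
  · exact hF.2 a ha 0 fun i => Nat.zero_le _
  · obtain ⟨b, hb, hbi⟩ := hst i
    exact hF.2 b hb _ (single_le_iff.mpr (Nat.one_le_iff_ne_zero.mpr hbi))

lemma Amat_eq_zero_of_le {n : ℕ} (h : n ≤ r) : Amat n r = 0 := by
  rw [Amat, Nat.card_eq_zero]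
  refine Or.inl ⟨fun ⟨F, hF, hst, hcard⟩ => ?_⟩
  have := card_le_card (hF.mu_subset_of_isStrict hst)
  rw [card_mu, hcard] at this
  omega

lemma Amat_succ_self (r : ℕ) : Amat (r + 1) r = 1 := by
  rw [Amat, Nat.card_eq_one_iff_exists]
  refine ⟨⟨mu r, isFerrers_mu r, isStrict_mu r, card_mu r⟩,
    fun ⟨F, hF, hst, hcard⟩ => ?_⟩
  exact Subtype.ext (eq_of_subset_of_card_le (hF.mu_subset_of_isStrict hst)
    (by rw [hcard, card_mu])).symm

end StrictCounts

lemma numPart_zero {n : ℕ} (hn : n ≠ 0) : numPart 0 n = 1 := by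
  rw [numPart, Nat.card_eq_one_iff_exists]
  refine ⟨⟨_, isFerrers_piFinset_range hn, by simp⟩, fun ⟨F, hF, hcard⟩ => ?_⟩
  subst hcard
  exact Subtype.ext (eq_of_subset_of_card_le hF.subset_piFinset (by simp))

noncomputable def bCoeff (n k : ℕ) : ℤ := Amat (n + 1) k + Amat (n + 1) (k + 1)

lemma numPart_succ_eq_sum_choose_mul_bCoeff (d n : ℕ) :
    (numPart d (n + 1) : ℤ) = ∑ k ∈ range (d + 1), (d.choose k : ℤ) * bCoeff n k := by
  rw [numPart_eq_sum_choose_mul_Amat]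
  push_cast
  simpa [bCoeff, mul_add, sum_add_distrib] using
    sum_choose_succ_mul (fun i _ => (Amat (n + 1) i : ℤ)) d

lemma bCoeff_eq_zero_of_lt {n k : ℕ} (h : n < k) : bCoeff n k = 0 := by
  simp [bCoeff, Amat_eq_zero_of_le h, Amat_eq_zero_of_le (h.trans k.lt_succ_self)]

lemma bCoeff_self (n : ℕ) : bCoeff n n = 1 := by
  simp [bCoeff, Amat_succ_self, Amat_eq_zero_of_le]

lemma bCoeff_zero (n : ℕ) : bCoeff n 0 = 1 := by
  simpa using (numPart_succ_eq_sum_choose_mul_bCoeff 0 n).symm.trans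
    (congrArg Nat.cast (numPart_zero n.succ_ne_zero))

theorem statement17_general (N : ℕ) :
    ∃ T : Matrix (Fin N) (Fin N) ℤ,
      (∀ i j : Fin N, i < j → T i j = 0) ∧
      (∀ i : Fin N, T i i = 1) ∧
      (∀ d : ℕ, 1 ≤ d → ∀ n : Fin N,
        (numPart d ((n : ℕ) + 1) : ℤ) = ∑ j : Fin N, (T ^ d) n j) := by
  obtain ⟨T, hlower, hdiag, hrow⟩ := exists_unitriangular_rowSum_pow
    (fun _ _ => bCoeff_eq_zero_of_lt) bCoeff_self bCoeff_zero
  exact ⟨T, hlower, hdiag, fun d _ n => by rw [hrow, numPart_succ_eq_sum_choose_mul_bCoeff]⟩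

/-- Hanna's conjecture, proved in the paper: for every `N ≥ 1` there is a
lower-triangular integer matrix `T` of size `N` with unit diagonal such that for all `d ≥ 1`
and all `1 ≤ n ≤ N`, `p_d(n)` is the sum of row `n−1` of `T^d`. -/
theorem statement17 (N : ℕ) (hN : 1 ≤ N) :
    ∃ T : Matrix (Fin N) (Fin N) ℤ,
      (∀ i j : Fin N, i < j → T i j = 0) ∧
      (∀ i : Fin N, T i i = 1) ∧
      (∀ d : ℕ, 1 ≤ d → ∀ n : Fin N,
        (numPart d ((n : ℕ) + 1) : ℤ) = ∑ j : Fin N, (T ^ d) n j) :=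
  statement17_general N
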